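/- arXiv:math/0305430 — 4 statements merged into one kernel-verified Lean document; each statement's English description precedes it below -/
import Mathlib

section
/- Evaluating the standard polynomial s_{2n-1} at the staircase sequence of matrix units e_{11}, e_{12}, e_{22}, e_{23}, ..., e_{(n-1)(n-1)}, e_{(n-1)n}, e_{nn} in M_n(F) yields the matrix unit e_{1n}. -/
/-!
A product of matrix units `e_{a₀b₀} ⋯ e_{a_k b_k}` is `e_{a₀ b_k}` when the units chain
(`b_i = a_{i+1}` for all `i`) and `0` otherwise. For the staircase sequence a permuted product
chains only if each factor comes strictly later in the sequence than the previous one, since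
`⌊(k + 1)/2⌋ = ⌊k'/2⌋` with `k ≠ k'` forces `k < k'`. So only the identity permutation
contributes, and `s_{2n-1}` collapses to the single term `e_{1n}`.
-/

open Matrix

/-- The standard polynomial `s_d` evaluated at `x : Fin d → R`. -/
noncomputable def stdPoly {R : Type*} [Ring R] (d : ℕ) (x : Fin d → R) : R :=
  ∑ σ : Equiv.Perm (Fin d), ((Equiv.Perm.sign σ : ℤˣ) : ℤ) • (List.ofFn fun i => x (σ i)).prod

/-- The staircase sequence `e₁₁, e₁₂, e₂₂, e₂₃, …, e₍ₙ₋₁₎ₙ, eₙₙ` of `2n-1` matrix units. -/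
noncomputable def staircase (F : Type*) [Field F] (n : ℕ) (hn : 0 < n)
    (k : Fin (2 * n - 1)) : Matrix (Fin n) (Fin n) F :=
  Matrix.single
    ⟨(k : ℕ) / 2, by have := k.isLt; omega⟩
    ⟨((k : ℕ) + 1) / 2, by have := k.isLt; omega⟩ 1

namespace Matrix

variable {ι R : Type*} [Fintype ι] [DecidableEq ι] [Semiring R]

theorem list_prod_ofFn_single_one {m : ℕ} (a b : Fin (m + 1) → ι) :
    (List.ofFn fun i => single (a i) (b i) (1 : R)).prod =
      if ∀ i : Fin m, b i.castSucc = a i.succ then single (a 0) (b (Fin.last m)) 1 else 0 := by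
  induction m with
  | zero => simp
  | succ m ih =>
    rw [List.ofFn_succ, List.prod_cons, ih (fun i => a i.succ) (fun i => b i.succ)]
    simp only [Fin.forall_fin_succ, Fin.castSucc_zero, Fin.succ_zero_eq_one, Fin.succ_castSucc,
      Fin.succ_last]
    by_cases h0 : b 0 = a 1 <;> simp [h0]

end Matrix

theorem Equiv.Perm.eq_one_of_strictMono {α : Type*} [LinearOrder α] [Finite α]
    {σ : Equiv.Perm α} (hσ : StrictMono σ) : σ = 1 :=
  Equiv.ext fun x => congrFun hσ.eq_id x

section Staircase

variable {m : ℕ}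

/- With `n = m + 1`, the `k`-th staircase unit is `e_{row k, col k}`; indexing by `2 * m + 1`
rather than `2 * n - 1` keeps the length a successor. -/
def staircaseRow (k : Fin (2 * m + 1)) : Fin (m + 1) := ⟨k / 2, by omega⟩

def staircaseCol (k : Fin (2 * m + 1)) : Fin (m + 1) := ⟨(k + 1) / 2, by omega⟩

@[simp]
theorem staircaseCol_castSucc (i : Fin (2 * m)) :
    staircaseCol i.castSucc = staircaseRow i.succ := rfl

@[simp]
theorem staircaseRow_zero : staircaseRow (0 : Fin (2 * m + 1)) = 0 := by
  ext
  simp [staircaseRow]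

@[simp]
theorem staircaseCol_last : staircaseCol (Fin.last (2 * m)) = Fin.last m := by
  ext
  simp only [staircaseCol, Fin.val_last]
  omega

theorem strictMono_of_staircaseCol_eq_staircaseRow {σ : Equiv.Perm (Fin (2 * m + 1))}
    (h : ∀ i : Fin (2 * m), staircaseCol (σ i.castSucc) = staircaseRow (σ i.succ)) :
    StrictMono σ := by
  refine Fin.strictMono_iff_lt_succ.2 fun i => ?_
  have hne : (σ i.castSucc : ℕ) ≠ σ i.succ :=
    Fin.val_ne_of_ne (σ.injective.ne i.castSucc_lt_succ.ne)
  have hchain := congrArg Fin.val (h i)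
  simp only [staircaseRow, staircaseCol] at hchain
  rw [Fin.lt_def]
  omega

theorem staircase_chain_iff {σ : Equiv.Perm (Fin (2 * m + 1))} :
    (∀ i : Fin (2 * m), staircaseCol (σ i.castSucc) = staircaseRow (σ i.succ)) ↔ σ = 1 := by
  refine ⟨fun h => Equiv.Perm.eq_one_of_strictMono
    (strictMono_of_staircaseCol_eq_staircaseRow h), ?_⟩
  rintro rfl
  simp

theorem list_prod_ofFn_staircase_perm (F : Type*) [Field F] (σ : Equiv.Perm (Fin (2 * m + 1))) :
    (List.ofFn fun i => staircase F (m + 1) m.succ_pos (σ i)).prod =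
      if σ = 1 then single 0 (Fin.last m) 1 else 0 := by
  change (List.ofFn fun i => single (staircaseRow (σ i)) (staircaseCol (σ i)) (1 : F)).prod = _
  rw [list_prod_ofFn_single_one (fun i => staircaseRow (σ i)) fun i => staircaseCol (σ i)]
  simp only [staircase_chain_iff]
  split_ifs with hσ
  · subst hσ
    simp
  · rfl

end Staircase

/-- Evaluating `s_{2n-1}` at the staircase sequence yields the matrix unit `e_{1n}`. -/
theorem stdPoly_staircase (F : Type*) [Field F] (n : ℕ) (hn : 0 < n) :
    stdPoly (2 * n - 1) (staircase F n hn) =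
      Matrix.single ⟨0, hn⟩ ⟨n - 1, by omega⟩ 1 := by
  obtain ⟨m, rfl⟩ : ∃ m, n = m + 1 := ⟨n - 1, by omega⟩
  change stdPoly (2 * m + 1) _ = _
  simp only [stdPoly, list_prod_ofFn_staircase_perm, smul_ite, smul_zero,
    Finset.sum_ite_eq', Finset.mem_univ, if_true, Equiv.Perm.sign_one, Units.val_one, one_smul]
  rfl
end

section
/- Let A be a subalgebra of the block upper triangular algebra E_{(ℓ,m)}(F) such that the image A_ℓ of A under projection to M_ℓ(F) satisfies the standard identity s_q, and the image A_m under projection to M_m(F) satisfies s_r. Then A satisfies the standard identity s_{q+r}. -/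
open Matrix

/-- Membership in `E_{(ℓ,m)}(F)`: the lower-left block vanishes. -/
def memE {F : Type*} [Field F] {ℓ m : ℕ}
    (M : Matrix (Fin ℓ ⊕ Fin m) (Fin ℓ ⊕ Fin m) F) : Prop :=
  ∀ (i : Fin m) (j : Fin ℓ), M (Sum.inr i) (Sum.inl j) = 0

/-- The projection `π_ℓ` onto the upper-left diagonal block. -/
def piL {F : Type*} [Field F] {ℓ m : ℕ}
    (M : Matrix (Fin ℓ ⊕ Fin m) (Fin ℓ ⊕ Fin m) F) : Matrix (Fin ℓ) (Fin ℓ) F :=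
  fun i j => M (Sum.inl i) (Sum.inl j)

/-- The projection `π_m` onto the lower-right diagonal block. -/
def piM {F : Type*} [Field F] {ℓ m : ℕ}
    (M : Matrix (Fin ℓ ⊕ Fin m) (Fin ℓ ⊕ Fin m) F) : Matrix (Fin m) (Fin m) F :=
  fun i j => M (Sum.inr i) (Sum.inr j)

/-! Grouping the permutations of `s_{q+r}(x)` by left cosets of `S_q × S_r` (a shuffle, or
Laplace, expansion) writes `s_{q+r}(x)` as a signed sum of products `s_q(y) · s_r(z)`, where
`y` and `z` are complementary subfamilies of `x`. For `x` in `A` the factor `s_q(y)` has zero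
upper-left block and `s_r(z)` has zero lower-right block, and a product of two block upper
triangular matrices of this shape vanishes. -/

theorem MultilinearMap.alternatization_domDomCongr {R M N ι ι' : Type*} [Semiring R]
    [AddCommMonoid M] [Module R M] [AddCommGroup N] [Module R N]
    [Fintype ι] [DecidableEq ι] [Fintype ι'] [DecidableEq ι']
    (e : ι ≃ ι') (f : MultilinearMap R (fun _ : ι => M) N) :
    alternatization (f.domDomCongr e) = (alternatization f).domDomCongr e := by
  refine AlternatingMap.ext fun v => ?_
  simp only [alternatization_apply, AlternatingMap.domDomCongr_apply, domDomCongr_apply]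
  rw [← (Equiv.permCongr e).sum_comp]
  refine Finset.sum_congr rfl fun σ _ => ?_
  simp [Equiv.Perm.sign_permCongr, Equiv.permCongr_apply]

section StdPoly

variable {R : Type*} [Ring R]

theorem stdPoly_eq_alternatization (d : ℕ) (x : Fin d → R) :
    stdPoly d x = MultilinearMap.alternatization (MultilinearMap.mkPiAlgebraFin ℤ d R) x := by
  simp [stdPoly, MultilinearMap.alternatization_apply, Units.smul_def]

theorem map_stdPoly {S G : Type*} [Ring S] [FunLike G R S] [RingHomClass G R S] (f : G) (d : ℕ)
    (x : Fin d → R) :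
    f (stdPoly d x) = stdPoly d (f ∘ x) := by
  simp [stdPoly, map_list_prod, List.map_ofFn, Function.comp_def]

open MultilinearMap in
theorem stdPoly_add_eq_sum_modSumCongr (q r : ℕ) (x : Fin (q + r) → R) :
    stdPoly (q + r) x = ∑ σ : Equiv.Perm.ModSumCongr (Fin q) (Fin r),
      Equiv.Perm.sign σ.out • (stdPoly q (fun i => x (finSumFinEquiv (σ.out (Sum.inl i)))) *
        stdPoly r (fun j => x (finSumFinEquiv (σ.out (Sum.inr j))))) := by
  have hsplit : (LinearMap.mul' ℤ R).compMultilinearMap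
        ((MultilinearMap.mkPiAlgebraFin ℤ q R).domCoprod (MultilinearMap.mkPiAlgebraFin ℤ r R)) =
      (MultilinearMap.mkPiAlgebraFin ℤ (q + r) R).domDomCongr finSumFinEquiv.symm := by
    ext v
    simp only [LinearMap.compMultilinearMap_apply, domCoprod_apply, LinearMap.mul'_apply,
      mkPiAlgebraFin_apply, domDomCongr_apply, List.ofFn_add, List.prod_append]
    congr 3 <;> ext i
    · exact congrArg v (finSumFinEquiv_symm_apply_castAdd i).symm
    · exact congrArg v (finSumFinEquiv_symm_apply_natAdd i).symm
  calc stdPoly (q + r) x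
      = alternatization
          ((MultilinearMap.mkPiAlgebraFin ℤ (q + r) R).domDomCongr finSumFinEquiv.symm)
          (x ∘ finSumFinEquiv) := by
        rw [stdPoly_eq_alternatization, alternatization_domDomCongr]
        simp [Function.comp_def]
    _ = LinearMap.mul' ℤ R (((alternatization (MultilinearMap.mkPiAlgebraFin ℤ q R)).domCoprod
          (alternatization (MultilinearMap.mkPiAlgebraFin ℤ r R))) (x ∘ finSumFinEquiv)) := by
        rw [← hsplit, LinearMap.compMultilinearMap_alternatization, domCoprod_alternization]
        rfl
    _ = _ := by
        rw [AlternatingMap.domCoprod_apply, _root_.sum_apply, _root_.map_sum]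
        refine Finset.sum_congr rfl fun σ _ => ?_
        conv_lhs => rw [← Quotient.out_eq' σ, AlternatingMap.domCoprod.summand_mk'']
        simp [stdPoly_eq_alternatization]

end StdPoly

section BlockUpperTriangular

variable (F : Type*) [Field F] (ℓ m : ℕ)

def blockUpperTriangular : Subalgebra F (Matrix (Fin ℓ ⊕ Fin m) (Fin ℓ ⊕ Fin m) F) where
  carrier := {M | memE M}
  mul_mem' {a b} ha hb i j := by
    simp [Matrix.mul_apply, Fintype.sum_sum_type, ha i, hb _ j]
  add_mem' {a b} ha hb i j := by
    simp [ha i j, hb i j]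
  algebraMap_mem' c i j := by
    simp [Matrix.algebraMap_matrix_apply]

def piLHom : blockUpperTriangular F ℓ m →+* Matrix (Fin ℓ) (Fin ℓ) F where
  toFun M := piL M.1
  map_one' := by
    ext i j
    simp [piL, Matrix.one_apply]
  map_mul' a b := by
    ext i j
    simp [piL, Matrix.mul_apply, Fintype.sum_sum_type, b.2 _ j]
  map_zero' := rfl
  map_add' _ _ := rfl

def piMHom : blockUpperTriangular F ℓ m →+* Matrix (Fin m) (Fin m) F where
  toFun M := piM M.1
  map_one' := by
    ext i j
    simp [piM, Matrix.one_apply]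
  map_mul' a b := by
    ext i j
    simp [piM, Matrix.mul_apply, Fintype.sum_sum_type, a.2 i]
  map_zero' := rfl
  map_add' _ _ := rfl

variable {F ℓ m}

theorem mul_eq_zero_of_piLHom_eq_zero_of_piMHom_eq_zero {a b : blockUpperTriangular F ℓ m}
    (ha : piLHom F ℓ m a = 0) (hb : piMHom F ℓ m b = 0) : a * b = 0 := by
  have ha₁₁ (i j) : a.1 (Sum.inl i) (Sum.inl j) = 0 := congrFun (congrFun ha i) j
  have hb₂₂ (i j) : b.1 (Sum.inr i) (Sum.inr j) = 0 := congrFun (congrFun hb i) j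
  have ha₂₁ : ∀ i j, a.1 (Sum.inr i) (Sum.inl j) = 0 := a.2
  have hb₂₁ : ∀ i j, b.1 (Sum.inr i) (Sum.inl j) = 0 := b.2
  ext (i | i) (j | j) <;>
    simp [Matrix.mul_apply, Fintype.sum_sum_type, ha₁₁, hb₂₂, ha₂₁, hb₂₁]

end BlockUpperTriangular

theorem subalgebra_of_blockUT_satisfies_sum_general (F : Type*) [Field F] (ℓ m q r : ℕ)
    (A : Subalgebra F (Matrix (Fin ℓ ⊕ Fin m) (Fin ℓ ⊕ Fin m) F))
    (hA : ∀ x ∈ A, memE x)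
    (hAq : ∀ x : Fin q → Matrix (Fin ℓ ⊕ Fin m) (Fin ℓ ⊕ Fin m) F,
      (∀ k, x k ∈ A) → stdPoly q (fun k => piL (x k)) = 0)
    (hAr : ∀ x : Fin r → Matrix (Fin ℓ ⊕ Fin m) (Fin ℓ ⊕ Fin m) F,
      (∀ k, x k ∈ A) → stdPoly r (fun k => piM (x k)) = 0) :
    ∀ x : Fin (q + r) → Matrix (Fin ℓ ⊕ Fin m) (Fin ℓ ⊕ Fin m) F,
      (∀ k, x k ∈ A) → stdPoly (q + r) x = 0 := by
  intro x hx
  let X : Fin (q + r) → blockUpperTriangular F ℓ m := fun k => ⟨x k, hA _ (hx k)⟩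
  suffices h : stdPoly (q + r) X = 0 by
    have hX : (blockUpperTriangular F ℓ m).val ∘ X = x := rfl
    rw [← hX, ← map_stdPoly, h, map_zero]
  rw [stdPoly_add_eq_sum_modSumCongr]
  refine Finset.sum_eq_zero fun σ _ => ?_
  rw [mul_eq_zero_of_piLHom_eq_zero_of_piMHom_eq_zero, smul_zero]
  · rw [map_stdPoly]
    exact hAq _ fun _ => hx _
  · rw [map_stdPoly]
    exact hAr _ fun _ => hx _

/-- If `A ⊆ E_{(ℓ,m)}(F)` is a subalgebra whose image `A_ℓ` satisfies `s_q` (`q ≤ 2ℓ`) and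
whose image `A_m` satisfies `s_r` (`r ≤ 2m`), then `A` satisfies `s_{q+r}`. -/
theorem subalgebra_of_blockUT_satisfies_sum (F : Type*) [Field F] (ℓ m q r : ℕ)
    (hℓ : 0 < ℓ) (hm : 0 < m) (hq : q ≤ 2 * ℓ) (hr : r ≤ 2 * m)
    (A : Subalgebra F (Matrix (Fin ℓ ⊕ Fin m) (Fin ℓ ⊕ Fin m) F))
    (hA : ∀ x ∈ A, memE x)
    (hAq : ∀ x : Fin q → Matrix (Fin ℓ ⊕ Fin m) (Fin ℓ ⊕ Fin m) F,
      (∀ k, x k ∈ A) → stdPoly q (fun k => piL (x k)) = 0)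
    (hAr : ∀ x : Fin r → Matrix (Fin ℓ ⊕ Fin m) (Fin ℓ ⊕ Fin m) F,
      (∀ k, x k ∈ A) → stdPoly r (fun k => piM (x k)) = 0) :
    ∀ x : Fin (q + r) → Matrix (Fin ℓ ⊕ Fin m) (Fin ℓ ⊕ Fin m) F,
      (∀ k, x k ∈ A) → stdPoly (q + r) x = 0 :=
  subalgebra_of_blockUT_satisfies_sum_general F ℓ m q r A hA hAq hAr
end

section
/- Every F-algebra automorphism of M_n(F), for F a field, is inner: there exists an invertible matrix Q ∈ M_n(F) such that the automorphism sends a to Q a Q^{-1} for all a. -/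
/-!
An algebra endomorphism `τ` of `M_n(F)` turns `F^n` into a second `M_n(F)`-module, `a` acting
by `τ a`. For fixed `j` and `v`, the map `c ↦ τ (c eⱼᵀ) v` intertwines the standard action with
this one, so its kernel is invariant under all matrices; as matrices act transitively on nonzero
vectors, it is injective as soon as it is nonzero, which happens for some `j, v` because
`∑ⱼ τ (Eⱼⱼ) = τ 1 = 1`. An injective endomorphism of `F^n` is invertible, and its matrix `Q`
satisfies `τ a * Q = Q * a`.
-/

namespace Matrix

theorem exists_mulVec_eq_of_ne_zero {F ι κ : Type*} [Field F] [Fintype ι] [DecidableEq ι]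
    {c : ι → F} (hc : c ≠ 0) (d : κ → F) : ∃ a : Matrix κ ι F, a *ᵥ c = d := by
  obtain ⟨j, hj⟩ := Function.ne_iff.mp hc
  refine ⟨vecMulVec d (Pi.single j (c j)⁻¹), ?_⟩
  rw [vecMulVec_mulVec, single_dotProduct, inv_mul_cancel₀ hj]
  simp

theorem injective_of_mulVec_intertwines {F ι κ : Type*} [Field F] [Fintype ι] [DecidableEq ι]
    [Fintype κ] (ρ : Matrix ι ι F → Matrix κ κ F) (Φ : (ι → F) →ₗ[F] κ → F)
    (hΦ : ∀ a c, Φ (a *ᵥ c) = ρ a *ᵥ Φ c) (h0 : Φ ≠ 0) : Function.Injective Φ := by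
  refine (injective_iff_map_eq_zero Φ).mpr fun c hc => ?_
  by_contra hc0
  refine h0 (LinearMap.ext fun d => ?_)
  obtain ⟨a, rfl⟩ := exists_mulVec_eq_of_ne_zero hc0 d
  rw [hΦ, hc, mulVec_zero, LinearMap.zero_apply]

section Intertwiner

variable {F ι κ : Type*} [Field F] [Fintype ι] [DecidableEq ι] [Fintype κ] [DecidableEq κ]

def algHomIntertwiner (τ : Matrix ι ι F →ₐ[F] Matrix κ κ F) (j : ι) (v : κ → F) :
    (ι → F) →ₗ[F] κ → F where
  toFun c := τ (vecMulVec c (Pi.single j 1)) *ᵥ v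
  map_add' c d := by simp only [add_vecMulVec, map_add, add_mulVec]
  map_smul' r c := by simp only [smul_vecMulVec, map_smul, smul_mulVec, RingHom.id_apply]

variable (τ : Matrix ι ι F →ₐ[F] Matrix κ κ F)

theorem algHomIntertwiner_mulVec (j : ι) (v : κ → F) (a : Matrix ι ι F) (c : ι → F) :
    algHomIntertwiner τ j v (a *ᵥ c) = τ a *ᵥ algHomIntertwiner τ j v c := by
  simp only [algHomIntertwiner, LinearMap.coe_mk, AddHom.coe_mk, ← mul_vecMulVec, map_mul,
    mulVec_mulVec]

theorem exists_algHomIntertwiner_ne_zero [Nonempty κ] :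
    ∃ j v, algHomIntertwiner τ j v ≠ 0 := by
  obtain ⟨j, hj⟩ : ∃ j, τ (single j j 1) ≠ 0 := by
    by_contra! h
    have h1 : τ 1 = 0 := by simp only [← sum_single_one, map_sum, h, Finset.sum_const_zero]
    exact one_ne_zero (h1 ▸ map_one τ).symm
  obtain ⟨v, hv⟩ : ∃ v, τ (single j j 1) *ᵥ v ≠ 0 := by
    by_contra! h
    exact hj (mulVec_injective (funext fun v => (h v).trans (zero_mulVec v).symm))
  refine ⟨j, v, fun h => hv ?_⟩
  have := LinearMap.congr_fun h (Pi.single j 1)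
  rwa [single_eq_single_vecMulVec_single]

end Intertwiner

theorem exists_units_conj_of_algHom {F ι : Type*} [Field F] [Fintype ι] [DecidableEq ι]
    (σ : Matrix ι ι F →ₐ[F] Matrix ι ι F) :
    ∃ Q : (Matrix ι ι F)ˣ, ∀ a, σ a = (Q : Matrix ι ι F) * a * (↑Q⁻¹ : Matrix ι ι F) := by
  cases isEmpty_or_nonempty ι
  · exact ⟨1, fun a => Subsingleton.elim _ _⟩
  obtain ⟨j, v, hΦ⟩ := exists_algHomIntertwiner_ne_zero σ
  set Φ := algHomIntertwiner σ j v
  have hunit : IsUnit Φ := (LinearMap.isUnit_iff_ker_eq_bot Φ).mpr <| LinearMap.ker_eq_bot.mpr <|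
    injective_of_mulVec_intertwines σ Φ (algHomIntertwiner_mulVec σ j v) hΦ
  refine ⟨(hunit.map LinearMap.toMatrixAlgEquiv').unit, fun a => ?_⟩
  rw [Units.eq_mul_inv_iff_mul_eq, IsUnit.unit_spec]
  refine mulVec_injective (funext fun c => ?_)
  have hQ : ∀ c, LinearMap.toMatrixAlgEquiv' Φ *ᵥ c = Φ c := LinearMap.toMatrix'_mulVec Φ
  rw [← mulVec_mulVec, ← mulVec_mulVec, hQ, hQ, algHomIntertwiner_mulVec]

end Matrix

/-- Every `F`-algebra automorphism of `M_n(F)` is inner: it is conjugation by some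
invertible matrix `Q`. -/
theorem matrix_algAut_inner (F : Type*) [Field F] (n : ℕ)
    (τ : Matrix (Fin n) (Fin n) F ≃ₐ[F] Matrix (Fin n) (Fin n) F) :
    ∃ Q : (Matrix (Fin n) (Fin n) F)ˣ,
      ∀ a : Matrix (Fin n) (Fin n) F, τ a = (Q : Matrix (Fin n) (Fin n) F) * a * ((Q⁻¹ : (Matrix (Fin n) (Fin n) F)ˣ) : Matrix (Fin n) (Fin n) F) :=
  Matrix.exists_units_conj_of_algHom τ.toAlgHom
end

section
/- Every proper F-subalgebra of the algebra U_n(F) of upper triangular n×n matrices over a field F satisfies the standard identity s_{2n-2}. -/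
/-!
Let `J` be the ideal of strictly upper triangular matrices in `U = U_n(F)`, so that `J^k` consists
of the matrices supported on `j ≥ i + k`. If a subalgebra `A` satisfies `A + J² = U`, then
`A = U`, because products of superdiagonal matrix units fill up all higher diagonals. So for
proper `A` the image of `A` in `U/J²`, a space of dimension `2n - 1`, has dimension at most
`2n - 2`, and `1, x_1, …, x_{2n-2}` are linearly dependent modulo `J²`: some `x_k` lies in the
span of the other `x_i`, `1` and `J²`. Now `s_{2n-2}` is alternating, vanishes when one argument
is `1` (its degree is even), and vanishes on `U` when one argument lies in `J²`: each entry of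
`s_d(x)` is a sum over lattice paths of determinants, and a path of `2n - 2` steps through `n`
rows either descends, stalls twice in a row, or climbs by at most one at every step.
-/

open Matrix

theorem AlternatingMap.map_eq_zero_of_sum_smul_mem {K M N ι : Type*} [Field K]
    [AddCommGroup M] [Module K M] [AddCommGroup N] [Module K N] [Fintype ι] [DecidableEq ι]
    (f : M [⋀^ι]→ₗ[K] N) {x : ι → M} {S : Submodule K M}
    (hS : ∀ k, ∀ s ∈ S, f (Function.update x k s) = 0) {c : ι → K} (hc : c ≠ 0)
    (hsum : ∑ i, c i • x i ∈ S) : f x = 0 := by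
  obtain ⟨k, hk : c k ≠ 0⟩ := Function.ne_iff.mp hc
  have hk_term : f (Function.update x k (∑ i, c i • x i)) = c k • f x := by
    rw [f.map_update_sum, Finset.sum_eq_single k]
    · rw [f.map_update_smul, Function.update_eq_self]
    · intro i _ hik
      rw [f.map_update_smul, f.map_update_self _ hik.symm, smul_zero]
    · simp
  exact (smul_eq_zero.mp (hk_term ▸ hS k _ hsum)).resolve_left hk

theorem List.prod_ofFn_insertNth_one {M : Type*} [Monoid M] {d : ℕ} (p : Fin (d + 1))
    (g : Fin d → M) : (List.ofFn (p.insertNth 1 g)).prod = (List.ofFn g).prod := by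
  induction d with
  | zero => simp [Fin.fin_one_eq_zero p, Fin.insertNth_zero']
  | succ e ih =>
    induction p using Fin.cases with
    | zero => simp [Fin.insertNth_zero']
    | succ i => rw [← Fin.cons_self_tail g, Fin.insertNth_succ_cons, List.ofFn_cons,
        List.ofFn_cons, List.prod_cons, List.prod_cons, ih]

theorem Matrix.list_prod_ofFn_apply {R : Type*} [CommSemiring R] {n d : ℕ}
    (y : Fin d → Matrix (Fin n) (Fin n) R) (p q : Fin n) :
    (List.ofFn y).prod p q = ∑ c : Fin (d + 1) → Fin n,
      if c 0 = p ∧ c (Fin.last d) = q then ∏ t, y t (c t.castSucc) (c t.succ) else 0 := by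
  induction d generalizing p with
  | zero =>
    rcases eq_or_ne p q with rfl | h
    · rw [← (Equiv.funUnique (Fin 1) (Fin n)).symm.sum_comp]
      simp
    · rw [List.ofFn_zero, List.prod_nil, one_apply_ne h]
      exact (Finset.sum_eq_zero fun c _ => if_neg fun hc => h (hc.1.symm.trans hc.2)).symm
  | succ d ih =>
    rw [List.ofFn_succ, List.prod_cons, Matrix.mul_apply,
      ← (Fin.consEquiv fun _ => Fin n).sum_comp, Fintype.sum_prod_type]
    simp only [ih, Finset.mul_sum, mul_ite, mul_zero]
    rw [Finset.sum_comm, Finset.sum_comm (γ := Fin n)]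
    refine Finset.sum_congr rfl fun c _ => ?_
    simp [Fin.consEquiv, Fin.prod_univ_succ, ← Fin.succ_last, ite_and]

theorem add_half_le_of_lt_add_two {a : ℕ → ℕ} {d : ℕ} (hmono : ∀ t < d, a t ≤ a (t + 1))
    (hpair : ∀ t, t + 2 ≤ d → a t < a (t + 2)) {i j : ℕ} (hij : i ≤ j) (hj : j ≤ d) :
    a i + (j - i) / 2 ≤ a j := by
  obtain ⟨k, rfl⟩ := Nat.exists_eq_add_of_le hij
  induction k using Nat.twoStepInduction with
  | zero => simp
  | one => simpa using hmono i (by omega)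
  | more k ih _ =>
    have := ih (by omega) (by omega)
    have := hpair (i + k) (by omega)
    rw [add_assoc] at this
    omega

theorem step_le_one_of_lt_add_two {a : ℕ → ℕ} {d : ℕ} (hmono : ∀ t < d, a t ≤ a (t + 1))
    (hpair : ∀ t, t + 2 ≤ d → a t < a (t + 2)) (hrise : a d ≤ a 0 + d / 2) :
    ∀ t < d, a (t + 1) ≤ a t + 1 := by
  intro t ht
  have h₁ := add_half_le_of_lt_add_two hmono hpair (Nat.zero_le t) ht.le
  have h₂ := add_half_le_of_lt_add_two hmono hpair (i := t + 1) ht le_rfl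
  omega

section StdPoly

noncomputable def stdPolyAlt (R A : Type*) [CommRing R] [Ring A] [Algebra R A] (d : ℕ) :
    A [⋀^Fin d]→ₗ[R] A :=
  MultilinearMap.alternatization (MultilinearMap.mkPiAlgebraFin R d A)

theorem stdPolyAlt_apply (R : Type*) {A : Type*} [CommRing R] [Ring A] [Algebra R A] {d : ℕ}
    (x : Fin d → A) : stdPolyAlt R A d x = stdPoly d x := by
  simp only [stdPolyAlt, MultilinearMap.alternatization_apply, MultilinearMap.domDomCongr_apply,
    MultilinearMap.mkPiAlgebraFin_apply, Units.smul_def, stdPoly]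

variable {A : Type*} [Ring A]

theorem stdPoly_cons_one {d : ℕ} (y : Fin d → A) :
    stdPoly (d + 1) (Fin.cons 1 y) = (∑ p : Fin (d + 1), (-1 : ℤ) ^ (p : ℕ)) • stdPoly d y := by
  -- `e (p, ρ)` sends `p` to `0` and `p.succAbove j` to `(ρ j).succ`.
  let e : Fin (d + 1) × Equiv.Perm (Fin d) → Equiv.Perm (Fin (d + 1)) := fun pρ =>
    Equiv.Perm.decomposeFin.symm (0, pρ.2) * Fin.cycleRange pρ.1
  have he0 : ∀ pρ, e pρ pρ.1 = 0 := by simp [e]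
  have he : Function.Bijective e := by
    refine (Fintype.bijective_iff_injective_and_card e).mpr
      ⟨?_, by simp [Fintype.card_perm, Nat.factorial_succ]⟩
    rintro ⟨p, ρ⟩ ⟨p', ρ'⟩ h
    obtain rfl : p = p' := (e (p', ρ')).injective ((h ▸ he0 (p, ρ)).trans (he0 _).symm)
    simpa [e] using h
  have hsign : ∀ pρ, ((Equiv.Perm.sign (e pρ) : ℤˣ) : ℤ)
      = (-1) ^ (pρ.1 : ℕ) * ((Equiv.Perm.sign pρ.2 : ℤˣ) : ℤ) := by
    rintro ⟨p, ρ⟩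
    simp [e, Equiv.Perm.decomposeFin.symm_sign, Fin.sign_cycleRange, mul_comm]
  have hcomp : ∀ pρ : Fin (d + 1) × Equiv.Perm (Fin d),
      (fun i => (Fin.cons 1 y : Fin (d + 1) → A) (e pρ i)) = pρ.1.insertNth 1 (y ∘ pρ.2) := by
    rintro ⟨p, ρ⟩
    rw [Fin.eq_insertNth_iff]
    constructor
    · simp [e]
    · ext j
      simp [e, Fin.removeNth]
  rw [stdPoly, ← he.sum_comp, Fintype.sum_prod_type, Finset.sum_smul, stdPoly]
  refine Finset.sum_congr rfl fun p _ => ?_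
  rw [Finset.smul_sum]
  refine Finset.sum_congr rfl fun ρ _ => ?_
  rw [hsign, hcomp, List.prod_ofFn_insertNth_one, mul_smul]
  rfl

theorem stdPoly_eq_zero_of_apply_eq_one {d : ℕ} (hd : Even d) (x : Fin d → A) {k : Fin d}
    (hk : x k = 1) : stdPoly d x = 0 := by
  obtain ⟨d, rfl⟩ : ∃ d', d = d' + 1 := Nat.exists_eq_succ_of_ne_zero (Fin.pos k).ne'
  have hx : x = (x ∘ Equiv.swap 0 k) ∘ Equiv.swap 0 k := by
    ext
    simp
  rw [← stdPolyAlt_apply ℤ, hx, (stdPolyAlt ℤ A _).map_perm, stdPolyAlt_apply,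
    ← Fin.cons_self_tail (x ∘ _)]
  simp [hk, stdPoly_cons_one, Fin.sum_neg_one_pow, hd]

end StdPoly

section RadPow

/-- `radPow R n k` is `J^k` for the ideal `J` of strictly upper triangular matrices in `U_n(R)`;
in particular `radPow R n 0 = U_n(R)`. -/
def radPow (R : Type*) [Semiring R] (n k : ℕ) : Submodule R (Matrix (Fin n) (Fin n) R) where
  carrier := {M | ∀ i j : Fin n, (j : ℕ) < i + k → M i j = 0}
  add_mem' hM hN i j h := by simp [hM i j h, hN i j h]
  zero_mem' _ _ _ := rfl
  smul_mem' r M hM i j h := by simp [hM i j h]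

variable {R : Type*} [Semiring R] {n : ℕ}

theorem mem_radPow {k : ℕ} {M : Matrix (Fin n) (Fin n) R} :
    M ∈ radPow R n k ↔ ∀ i j : Fin n, (j : ℕ) < i + k → M i j = 0 := Iff.rfl

theorem coe_radPow_zero :
    (radPow R n 0 : Set (Matrix (Fin n) (Fin n) R)) = {M | ∀ i j : Fin n, j < i → M i j = 0} := by
  ext M
  simp only [SetLike.mem_coe, mem_radPow, add_zero, Set.mem_ofPred_eq, Fin.lt_def]

theorem radPow_antitone : Antitone (radPow R n) := by
  intro a b hab M hM i j h
  exact hM i j (by omega)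

theorem mul_mem_radPow {a b : ℕ} {M N : Matrix (Fin n) (Fin n) R} (hM : M ∈ radPow R n a)
    (hN : N ∈ radPow R n b) : M * N ∈ radPow R n (a + b) := by
  intro i j hij
  rw [mul_apply]
  refine Finset.sum_eq_zero fun m _ => ?_
  by_cases hm : (m : ℕ) < i + a
  · rw [hM i m hm, zero_mul]
  · rw [hN m j (by omega), mul_zero]

theorem single_mem_radPow {i j : Fin n} {k : ℕ} (h : (i : ℕ) + k ≤ j) (r : R) :
    single i j r ∈ radPow R n k := by
  intro i' j' h'
  apply single_apply_of_ne
  rintro ⟨rfl, rfl⟩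
  omega

theorem radPow_le_of_single_mem {P : Submodule R (Matrix (Fin n) (Fin n) R)} {k : ℕ}
    (h : ∀ i j : Fin n, (i : ℕ) + k ≤ j → single i j 1 ∈ P) : radPow R n k ≤ P := by
  intro M hM
  rw [matrix_eq_sum_single M]
  refine P.sum_mem fun i _ => P.sum_mem fun j _ => ?_
  by_cases hij : (j : ℕ) < i + k
  · simp [hM i j hij]
  · rw [← mul_one (M i j), ← smul_eq_mul, ← smul_single]
    exact P.smul_mem _ (h i j (by omega))

theorem radPow_eq_bot {k : ℕ} (hk : n ≤ k) : radPow R n k = ⊥ := by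
  refine eq_bot_iff.mpr fun M hM => ?_
  ext i j
  exact hM i j (by omega)

theorem one_notMem_radPow [Nontrivial R] {k : ℕ} (hn : 0 < n) (hk : 0 < k) :
    (1 : Matrix (Fin n) (Fin n) R) ∉ radPow R n k :=
  fun h => one_ne_zero (h ⟨0, hn⟩ ⟨0, hn⟩ (by simpa using hk))

end RadPow

section Paths

variable {R : Type*} [CommRing R] {n d : ℕ}

def pathMatrix (x : Fin d → Matrix (Fin n) (Fin n) R) (c : Fin (d + 1) → Fin n) :
    Matrix (Fin d) (Fin d) R :=
  of fun k t => x k (c t.castSucc) (c t.succ)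

theorem stdPoly_apply (x : Fin d → Matrix (Fin n) (Fin n) R) (p q : Fin n) :
    stdPoly d x p q = ∑ c : Fin (d + 1) → Fin n,
      if c 0 = p ∧ c (Fin.last d) = q then (pathMatrix x c).det else 0 := by
  simp only [stdPoly, Matrix.sum_apply, Matrix.smul_apply, list_prod_ofFn_apply, Finset.smul_sum,
    smul_ite, smul_zero]
  rw [Finset.sum_comm]
  refine Finset.sum_congr rfl fun c _ => ?_
  split_ifs
  · simp [Matrix.det_apply, pathMatrix, Units.smul_def]
  · simp

/- A descending step of the path `c` gives a zero column and two consecutive stalls give equal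
columns. Otherwise every two steps climb, and since the path climbs at most `n - 1 ≤ d / 2` in
all, every step climbs by at most one, which makes the row of `x k₀` vanish. -/
theorem det_pathMatrix_eq_zero (hd : 2 * n ≤ d + 2) {x : Fin d → Matrix (Fin n) (Fin n) R}
    (hx : ∀ k, x k ∈ radPow R n 0) {k₀ : Fin d} (hk₀ : x k₀ ∈ radPow R n 2)
    (c : Fin (d + 1) → Fin n) : (pathMatrix x c).det = 0 := by
  let a : ℕ → ℕ := fun t => if h : t < d + 1 then c ⟨t, h⟩ else 0
  have hcs : ∀ t : Fin d, (c t.castSucc : ℕ) = a t := fun t => by simp [a]; rfl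
  have hs : ∀ t : Fin d, (c t.succ : ℕ) = a (t + 1) := fun t => by simp [a]; rfl
  by_cases hmono : ∀ t < d, a t ≤ a (t + 1)
  swap
  · push Not at hmono
    obtain ⟨t, ht, hdesc⟩ := hmono
    refine det_eq_zero_of_column_eq_zero ⟨t, ht⟩ fun k => hx k _ _ ?_
    rw [hcs, hs]
    omega
  by_cases hpair : ∀ t, t + 2 ≤ d → a t < a (t + 2)
  swap
  · push Not at hpair
    obtain ⟨t, ht, hflat⟩ := hpair
    have h₁ := hmono t (by omega)
    have h₂ : a (t + 1) ≤ a (t + 2) := hmono (t + 1) (by omega)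
    refine det_zero_of_column_eq (i := ⟨t, by omega⟩) (j := ⟨t + 1, by omega⟩) (by simp)
      fun k => ?_
    simp only [pathMatrix, of_apply]
    congr 1 <;> ext <;> simp only [hcs, hs, add_assoc, Nat.reduceAdd] <;> omega
  have hstep := step_le_one_of_lt_add_two hmono hpair (by
    have := (c (Fin.last d)).isLt
    have : (c (Fin.last d) : ℕ) = a d := by simp [a]; rfl
    omega)
  refine det_eq_zero_of_row_eq_zero k₀ fun t => hk₀ _ _ ?_
  rw [hcs, hs]
  have := hstep t t.isLt
  omega

theorem stdPoly_eq_zero_of_mem_radPow_two (hd : 2 * n ≤ d + 2)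
    {x : Fin d → Matrix (Fin n) (Fin n) R} (hx : ∀ k, x k ∈ radPow R n 0) {k₀ : Fin d}
    (hk₀ : x k₀ ∈ radPow R n 2) : stdPoly d x = 0 := by
  ext p q
  rw [stdPoly_apply, Matrix.zero_apply]
  exact Finset.sum_eq_zero fun c _ => by simp [det_pathMatrix_eq_zero hd hx hk₀ c]

theorem stdPoly_update_eq_zero_of_mem_sup (hd : 2 * n ≤ d + 2) (hev : Even d)
    {x : Fin d → Matrix (Fin n) (Fin n) R} (hx : ∀ k, x k ∈ radPow R n 0) (k : Fin d)
    {s : Matrix (Fin n) (Fin n) R} (hs : s ∈ (R ∙ 1) ⊔ radPow R n 2) :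
    stdPoly d (Function.update x k s) = 0 := by
  obtain ⟨_, ha, b, hb, rfl⟩ := Submodule.mem_sup.mp hs
  obtain ⟨r, rfl⟩ := Submodule.mem_span_singleton.mp ha
  have hxb : ∀ k', Function.update x k b k' ∈ radPow R n 0 :=
    (Function.forall_update_iff x (fun _ M => M ∈ radPow R n 0)).mpr
      ⟨radPow_antitone (Nat.zero_le 2) hb, fun k' _ => hx k'⟩
  rw [← stdPolyAlt_apply R, AlternatingMap.map_update_add, AlternatingMap.map_update_smul,
    stdPolyAlt_apply, stdPolyAlt_apply,
    stdPoly_eq_zero_of_apply_eq_one hev _ (Function.update_self k 1 x),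
    stdPoly_eq_zero_of_mem_radPow_two hd hxb (k₀ := k) (by rwa [Function.update_self]),
    smul_zero, add_zero]

end Paths

section Subalgebra

variable {R : Type*} [CommRing R] {n : ℕ} (A : Subalgebra R (Matrix (Fin n) (Fin n) R))

theorem mul_mem_sup_radPow {a b : ℕ} {M N : Matrix (Fin n) (Fin n) R} (hM : M ∈ radPow R n a)
    (hM' : M ∈ Subalgebra.toSubmodule A ⊔ radPow R n (a + 1)) (hN : N ∈ radPow R n b)
    (hN' : N ∈ Subalgebra.toSubmodule A ⊔ radPow R n (b + 1)) :
    M * N ∈ Subalgebra.toSubmodule A ⊔ radPow R n (a + b + 1) := by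
  obtain ⟨M₀, hM₀, V, hV, rfl⟩ := Submodule.mem_sup.mp hM'
  obtain ⟨N₀, hN₀, W, hW, rfl⟩ := Submodule.mem_sup.mp hN'
  have hM₀a : M₀ ∈ radPow R n a := by
    simpa using (radPow R n a).sub_mem hM (radPow_antitone (by omega) hV)
  rw [show (M₀ + V) * (N₀ + W) = M₀ * N₀ + (M₀ * W + V * (N₀ + W)) by noncomm_ring]
  refine Submodule.add_mem_sup (A.mul_mem hM₀ hN₀) (Submodule.add_mem _ ?_ ?_)
  · exact radPow_antitone (by omega) (mul_mem_radPow hM₀a hW)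
  · exact radPow_antitone (by omega) (mul_mem_radPow hV hN)

theorem radPow_le_sup_radPow_succ
    (h : radPow R n 1 ≤ Subalgebra.toSubmodule A ⊔ radPow R n 2) {k : ℕ} (hk : 1 ≤ k) :
    radPow R n k ≤ Subalgebra.toSubmodule A ⊔ radPow R n (k + 1) := by
  induction k, hk using Nat.le_induction with
  | base => exact h
  | succ k hk ih =>
    refine radPow_le_of_single_mem fun i j hij => ?_
    let m : Fin n := ⟨j - 1, by omega⟩
    have him : (i : ℕ) + k ≤ m := by simp only [m]; omega
    have hmj : (m : ℕ) + 1 ≤ j := by simp only [m]; omega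
    rw [← one_mul (1 : R), ← single_mul_single_same (1 : R) i m j (1 : R)]
    exact mul_mem_sup_radPow A (single_mem_radPow him 1) (ih (single_mem_radPow him 1))
      (single_mem_radPow hmj 1) (h (single_mem_radPow hmj 1))

theorem radPow_zero_le_of_le_sup_radPow_two
    (h : radPow R n 0 ≤ Subalgebra.toSubmodule A ⊔ radPow R n 2) :
    radPow R n 0 ≤ Subalgebra.toSubmodule A := by
  have hk : ∀ k, 2 ≤ k → radPow R n 0 ≤ Subalgebra.toSubmodule A ⊔ radPow R n k := by
    intro k hk
    induction k, hk using Nat.le_induction with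
    | base => exact h
    | succ k hk ih => exact ih.trans (sup_le le_sup_left
        (radPow_le_sup_radPow_succ A ((radPow_antitone (Nat.zero_le 1)).trans h) (by omega)))
  simpa [radPow_eq_bot (Nat.le_add_right n 2)] using hk (n + 2) (by omega)

end Subalgebra

section Dimension

def diagSuperdiag (R : Type*) [Semiring R] (n : ℕ) :
    Matrix (Fin n) (Fin n) R →ₗ[R] (Fin n → R) × (Fin (n - 1) → R) :=
  (diagLinearMap (Fin n) R R).prod <| LinearMap.pi fun c : Fin (n - 1) =>
    entryLinearMap R R (⟨c, by omega⟩ : Fin n) ⟨c + 1, by omega⟩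

theorem mem_radPow_two_of_diagSuperdiag_eq_zero {R : Type*} [Semiring R] {n : ℕ}
    {M : Matrix (Fin n) (Fin n) R} (hM : M ∈ radPow R n 0) (h : diagSuperdiag R n M = 0) :
    M ∈ radPow R n 2 := by
  intro i j hij
  rcases lt_trichotomy (j : ℕ) i with hji | hji | hji
  · exact hM i j (by omega)
  · obtain rfl : j = i := Fin.ext hji
    exact congrFun (congrArg Prod.fst h) j
  · have h₂ : M i ⟨i + 1, by omega⟩ = 0 := congrFun (congrArg Prod.snd h) ⟨i, by omega⟩
    rwa [show j = ⟨i + 1, by omega⟩ from Fin.ext (by simp only; omega)]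

theorem exists_ne_zero_sum_smul_mem_radPow_two {F : Type*} [Field F] {n : ℕ}
    {P : Submodule F (Matrix (Fin n) (Fin n) F)} (hP : P ≤ radPow F n 0)
    (hP₂ : ¬ radPow F n 0 ≤ P ⊔ radPow F n 2) {ι : Type*} [Fintype ι]
    (v : ι → Matrix (Fin n) (Fin n) F) (hv : ∀ i, v i ∈ P) (hcard : 2 * n - 1 ≤ Fintype.card ι) :
    ∃ g : ι → F, g ≠ 0 ∧ ∑ i, g i • v i ∈ radPow F n 2 := by
  set φ := diagSuperdiag F n
  have hlt : P.map φ < (radPow F n 0).map φ := by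
    refine lt_of_le_of_ne (Submodule.map_mono hP) fun heq => hP₂ fun M hM => ?_
    obtain ⟨M₀, hM₀, hφ⟩ := heq ▸ Submodule.mem_map_of_mem (f := φ) hM
    have hdiff : M - M₀ ∈ radPow F n 2 := mem_radPow_two_of_diagSuperdiag_eq_zero
      ((radPow F n 0).sub_mem hM (hP hM₀)) (by rw [map_sub, hφ, sub_self])
    simpa using Submodule.add_mem_sup hM₀ hdiff
  have hrank : Module.finrank F (P.map φ) < Fintype.card ι := by
    have := (Submodule.finrank_lt_finrank_of_lt hlt).trans_le (Submodule.finrank_le _)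
    simp only [Module.finrank_prod, Module.finrank_fin_fun] at this
    omega
  have hdep : ¬ LinearIndependent F (φ ∘ v) := fun hli => by
    have hspan : Submodule.span F (Set.range (φ ∘ v)) ≤ P.map φ :=
      Submodule.span_le.mpr (Set.range_subset_iff.mpr fun i => Submodule.mem_map_of_mem (hv i))
    have := Submodule.finrank_mono hspan
    rw [finrank_span_eq_card hli] at this
    omega
  obtain ⟨g, hg, i, hi⟩ := Fintype.not_linearIndependent_iff.mp hdep
  refine ⟨g, Function.ne_iff.mpr ⟨i, hi⟩, mem_radPow_two_of_diagSuperdiag_eq_zero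
    (Submodule.sum_mem _ fun j _ => Submodule.smul_mem _ _ (hP (hv j))) ?_⟩
  simpa [map_sum] using hg

end Dimension

/-- Every proper `F`-subalgebra of the upper triangular matrices `U_n(F)` satisfies the
standard identity `s_{2n-2}`. -/
theorem proper_subalgebra_of_triangular_satisfies (F : Type*) [Field F] (n : ℕ) (hn : 2 ≤ n)
    (A : Subalgebra F (Matrix (Fin n) (Fin n) F))
    (hA : (A : Set (Matrix (Fin n) (Fin n) F)) ⊂
      {M : Matrix (Fin n) (Fin n) F | ∀ i j : Fin n, j < i → M i j = 0}) :
    ∀ x : Fin (2 * n - 2) → Matrix (Fin n) (Fin n) F,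
      (∀ k, x k ∈ A) → stdPoly (2 * n - 2) x = 0 := by
  intro x hx
  rw [← coe_radPow_zero, ← Subalgebra.coe_toSubmodule, SetLike.coe_ssubset_coe] at hA
  have hA₂ : ¬ radPow F n 0 ≤ Subalgebra.toSubmodule A ⊔ radPow F n 2 :=
    fun h => hA.not_ge (radPow_zero_le_of_le_sup_radPow_two A h)
  obtain ⟨g, hg, hgJ⟩ := exists_ne_zero_sum_smul_mem_radPow_two hA.le hA₂
    (fun o : Option (Fin (2 * n - 2)) => o.elim 1 x)
    (by rintro (_ | k); exacts [A.one_mem, hx k]) (by simp; omega)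
  simp only [Fintype.sum_option, Option.elim] at hgJ
  have hc : (fun k => g (some k)) ≠ 0 := by
    intro hc₀
    have hnone : g none ≠ 0 := fun h₀ => hg (funext fun o => by
      cases o
      exacts [h₀, congrFun hc₀ _])
    simp only [show ∀ k, g (some k) = 0 from congrFun hc₀, zero_smul, Finset.sum_const_zero,
      add_zero] at hgJ
    exact one_notMem_radPow (by omega) two_pos ((Submodule.smul_mem_iff _ hnone).mp hgJ)
  rw [← stdPolyAlt_apply F]
  refine (stdPolyAlt F _ _).map_eq_zero_of_sum_smul_mem (S := (F ∙ 1) ⊔ radPow F n 2)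
    (fun k s hs => ?_) hc ?_
  · rw [stdPolyAlt_apply]
    exact stdPoly_update_eq_zero_of_mem_sup (by omega) ⟨n - 1, by omega⟩
      (fun k => hA.le (hx k)) k hs
  · rw [← add_sub_cancel_left (g none • (1 : Matrix (Fin n) (Fin n) F)) (∑ k, _)]
    exact Submodule.sub_mem _ (Submodule.mem_sup_right hgJ)
      (Submodule.mem_sup_left (Submodule.smul_mem _ _ (Submodule.mem_span_singleton_self 1)))
end
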